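/- Let (X,R) and (Y,R') be dualisable q-Hecke Yang-Baxter operators with braided traces tr(R) := ev∘Rᵉ∘coev and tr(R') defined analogously. Then the braided trace of the glueing satisfies tr(R ⊕_q R') = tr(R) + tr(R') − (q−q⁻¹)·tr(R)·tr(R'). -/

import Mathlib

/-!
Identify `V ⊗ W*` with `Hom(W, V)`; then the partial adjoint sends `φ ⊗ v` to the map
`w ↦ (φ ⊗ id) (R (v ⊗ w))`, and identities between tensors can be checked on linear maps.
On the images of `X* ⊗ X` and `Y* ⊗ Y` in `(X ⊕ Y)* ⊗ (X ⊕ Y)`, the partial adjoint of the glueing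
acts as `R̃` and `R̃'`, except that the crossing term `(q - q⁻¹) y ⊗ x` of the glueing on `Y ⊗ X`
contributes `(q - q⁻¹) ψ(w) coev_X` to the image of `ψ ⊗ w`. Since
`coev_{X ⊕ Y} = coev_X + coev_Y`, the preimage of `coev_{X ⊕ Y}` is therefore
`c_X + c_Y - (q - q⁻¹) tr(R') c_X`, where `c_X = (R̃)⁻¹ coev_X` and `c_Y = (R̃')⁻¹ coev_Y`;
evaluating it gives the formula.
-/

open TensorProduct LinearMap

noncomputable section

variable (k : Type*) [Field k]

/-- The quantum Yang-Baxter (braid) relation for an operator on `V ⊗ V`. -/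
def Braid {V : Type*} [AddCommGroup V] [Module k V]
    (Q : V ⊗[k] V →ₗ[k] V ⊗[k] V) : Prop :=
  Q.rTensor V ∘ₗ
      ((TensorProduct.assoc k V V V).symm.toLinearMap ∘ₗ Q.lTensor V ∘ₗ
        (TensorProduct.assoc k V V V).toLinearMap) ∘ₗ
      Q.rTensor V =
    ((TensorProduct.assoc k V V V).symm.toLinearMap ∘ₗ Q.lTensor V ∘ₗ
        (TensorProduct.assoc k V V V).toLinearMap) ∘ₗ
      Q.rTensor V ∘ₗ
      ((TensorProduct.assoc k V V V).symm.toLinearMap ∘ₗ Q.lTensor V ∘ₗ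
        (TensorProduct.assoc k V V V).toLinearMap)

variable (V : Type*) [AddCommGroup V] [Module k V] [FiniteDimensional k V]

/-- The partial (generalized) adjoint `R̃ : V*⊗V → V⊗V*` of an operator
`R : V⊗V → V⊗V`, formed with the evaluation and coevaluation:
`R̃ = (ev⊗id⊗id)(id⊗R⊗id)(id⊗id⊗coev)`. -/
def tilde (f : V ⊗[k] V →ₗ[k] V ⊗[k] V) :
    Module.Dual k V ⊗[k] V →ₗ[k] V ⊗[k] Module.Dual k V :=
  (TensorProduct.lid k (V ⊗[k] Module.Dual k V)).toLinearMap ∘ₗ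
    LinearMap.rTensor (V ⊗[k] Module.Dual k V) (contractLeft k V) ∘ₗ
    (TensorProduct.assoc k (Module.Dual k V) V (V ⊗[k] Module.Dual k V)).symm.toLinearMap ∘ₗ
    LinearMap.lTensor (Module.Dual k V) (TensorProduct.assoc k V V (Module.Dual k V)).toLinearMap ∘ₗ
    LinearMap.lTensor (Module.Dual k V) (LinearMap.rTensor (Module.Dual k V) f) ∘ₗ
    LinearMap.lTensor (Module.Dual k V)
      (TensorProduct.assoc k V V (Module.Dual k V)).symm.toLinearMap ∘ₗ
    (TensorProduct.assoc k (Module.Dual k V) V (V ⊗[k] Module.Dual k V)).toLinearMap ∘ₗ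
    LinearMap.lTensor (Module.Dual k V ⊗[k] V) (coevaluation k V) ∘ₗ
    (TensorProduct.rid k (Module.Dual k V ⊗[k] V)).symm.toLinearMap

/-- The braided (categorical) trace `tr(R) = ev ∘ Rᵉ ∘ coev ∈ k`, computed from
a two-sided inverse `B = (R̃)⁻¹ : V⊗V* → V*⊗V` of the partial adjoint of `R`
(this inverse is `Rᵉ|_{V⊗V*}`). -/
def btrace (B : V ⊗[k] Module.Dual k V →ₗ[k] Module.Dual k V ⊗[k] V) : k :=
  contractLeft k V (B (coevaluation k V 1))

end

namespace TensorProduct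

variable {k : Type*} [Field k]

def contractFirst {V W : Type*} [AddCommGroup V] [Module k V] [AddCommGroup W] [Module k W]
    (φ : Module.Dual k V) : V ⊗[k] W →ₗ[k] W :=
  (TensorProduct.lid k W).toLinearMap ∘ₗ φ.rTensor W

@[simp] lemma contractFirst_tmul {V W : Type*} [AddCommGroup V] [Module k V] [AddCommGroup W]
    [Module k W] (φ : Module.Dual k V) (a : V) (b : W) : contractFirst φ (a ⊗ₜ[k] b) = φ a • b :=
  rfl

def homOfTensorDual (W Z : Type*) [AddCommGroup W] [Module k W] [AddCommGroup Z]
    [Module k Z] : Z ⊗[k] Module.Dual k W →ₗ[k] W →ₗ[k] Z :=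
  dualTensorHom k W Z ∘ₗ (TensorProduct.comm k Z (Module.Dual k W)).toLinearMap

variable {V W Z : Type*} [AddCommGroup V] [Module k V] [AddCommGroup W] [Module k W]
  [AddCommGroup Z] [Module k Z]

@[simp] lemma homOfTensorDual_tmul (z : Z) (φ : Module.Dual k W) (w : W) :
    homOfTensorDual W Z (z ⊗ₜ[k] φ) w = φ w • z := rfl

lemma homOfTensorDual_injective [FiniteDimensional k W] :
    Function.Injective (homOfTensorDual (k := k) W Z) :=
  dualTensorHom_bijective.injective.comp (TensorProduct.comm k Z _).injective

lemma homOfTensorDual_coevaluation [FiniteDimensional k V] :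
    homOfTensorDual V V (coevaluation k V 1) = LinearMap.id := by
  ext v
  simp only [coevaluation_apply_one, map_sum, LinearMap.sum_apply, homOfTensorDual_tmul,
    Module.Basis.coord_apply, Module.Basis.sum_repr, LinearMap.id_apply]

lemma contractFirst_map {V' W' : Type*} [AddCommGroup V'] [Module k V'] [AddCommGroup W']
    [Module k W'] (φ : Module.Dual k V') (i : V →ₗ[k] V') (j : W →ₗ[k] W') (t : V ⊗[k] W) :
    contractFirst φ (map i j t) = j (contractFirst (φ ∘ₗ i) t) := by
  induction t using TensorProduct.induction_on with
  | zero => simp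
  | tmul v w => simp
  | add x y hx hy => simp only [map_add, hx, hy]

lemma homOfTensorDual_map {V' Z' : Type*} [AddCommGroup V'] [Module k V'] [AddCommGroup Z']
    [Module k Z'] (G : Z →ₗ[k] Z') (p : V' →ₗ[k] V) (t : Z ⊗[k] Module.Dual k V) :
    homOfTensorDual V' Z' (map G p.dualMap t) = G ∘ₗ homOfTensorDual V Z t ∘ₗ p := by
  induction t using TensorProduct.induction_on with
  | zero => simp
  | tmul z φ => ext; simp
  | add x y hx hy => simp only [map_add, hx, hy, LinearMap.add_comp, LinearMap.comp_add]

lemma homOfTensorDual_rTensor (G : Z →ₗ[k] V) (t : Z ⊗[k] Module.Dual k W) :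
    homOfTensorDual W V (G.rTensor _ t) = G ∘ₗ homOfTensorDual W Z t := by
  have h := homOfTensorDual_map G (LinearMap.id : W →ₗ[k] W) t
  rwa [LinearMap.dualMap_id, LinearMap.comp_id] at h

end TensorProduct

section PartialAdjoint

variable {k : Type*} [Field k] {V : Type*} [AddCommGroup V] [Module k V]
  [FiniteDimensional k V]

lemma tilde_tmul (f : V ⊗[k] V →ₗ[k] V ⊗[k] V) (φ : Module.Dual k V) (v : V) :
    tilde k V f (φ ⊗ₜ v) =
      (contractFirst φ ∘ₗ f ∘ₗ TensorProduct.mk k V V v).rTensor _ (coevaluation k V 1) := by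
  have contract_tmul : ∀ (F : V ⊗[k] V) (ψ : Module.Dual k V),
      TensorProduct.lid k _ ((contractLeft k V).rTensor _ ((TensorProduct.assoc k _ _ _).symm
        (φ ⊗ₜ TensorProduct.assoc k V V _ (F ⊗ₜ ψ)))) = contractFirst φ F ⊗ₜ ψ := by
    intro F ψ
    induction F using TensorProduct.induction_on with
    | zero => simp
    | tmul a b => simp [TensorProduct.smul_tmul']
    | add x y hx hy => simp only [add_tmul, tmul_add, map_add, hx, hy]
  simp only [tilde, LinearMap.coe_comp, Function.comp_apply, LinearEquiv.coe_coe,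
    TensorProduct.rid_symm_apply, LinearMap.lTensor_tmul]
  induction coevaluation k V 1 using TensorProduct.induction_on with
  | zero => simp
  | tmul w ψ =>
    simp only [TensorProduct.assoc_tmul, LinearMap.lTensor_tmul, LinearMap.rTensor_tmul]
    exact contract_tmul _ _
  | add x y hx hy => simp only [tmul_add, map_add, hx, hy]

lemma homOfTensorDual_tilde_tmul (f : V ⊗[k] V →ₗ[k] V ⊗[k] V) (φ : Module.Dual k V) (v : V) :
    homOfTensorDual V V (tilde k V f (φ ⊗ₜ v)) = contractFirst φ ∘ₗ f ∘ₗ TensorProduct.mk k V V v := by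
  rw [tilde_tmul, homOfTensorDual_rTensor, homOfTensorDual_coevaluation, LinearMap.comp_id]

lemma btrace_eq_contractLeft {f : V ⊗[k] V →ₗ[k] V ⊗[k] V}
    {B : V ⊗[k] Module.Dual k V →ₗ[k] Module.Dual k V ⊗[k] V}
    (hB : B ∘ₗ tilde k V f = LinearMap.id) {u : Module.Dual k V ⊗[k] V}
    (hu : tilde k V f u = coevaluation k V 1) :
    btrace k V B = contractLeft k V u := by
  rw [btrace, ← hu, ← LinearMap.comp_apply B, hB, LinearMap.id_apply]

end PartialAdjoint

section Glueing

variable {k : Type*} [Field k] {X Y : Type*}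
  [AddCommGroup X] [Module k X] [FiniteDimensional k X]
  [AddCommGroup Y] [Module k Y] [FiniteDimensional k Y]

lemma coevaluation_prod :
    coevaluation k (X × Y) 1 =
      map (inl k X Y) (fst k X Y).dualMap (coevaluation k X 1) +
        map (inr k X Y) (snd k X Y).dualMap (coevaluation k Y 1) := by
  apply homOfTensorDual_injective (k := k)
  refine LinearMap.ext fun w => ?_
  simp [homOfTensorDual_map, homOfTensorDual_coevaluation]

lemma contractLeft_map_dualMap_of_comp_eq_id {V W : Type*} [AddCommGroup V] [Module k V]
    [AddCommGroup W] [Module k W] {p : V →ₗ[k] W} {i : W →ₗ[k] V}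
    (h : p ∘ₗ i = LinearMap.id) (t : Module.Dual k W ⊗[k] W) :
    contractLeft k V (map p.dualMap i t) = contractLeft k W t := by
  induction t using TensorProduct.induction_on with
  | zero => simp
  | tmul φ w => simp [← LinearMap.comp_apply p i, h]
  | add x y hx hy => simp only [map_add, hx, hy]

lemma tilde_glue_map_inl (R : X ⊗[k] X →ₗ[k] X ⊗[k] X)
    (Q : (X × Y) ⊗[k] (X × Y) →ₗ[k] (X × Y) ⊗[k] (X × Y))
    (hXX : Q ∘ₗ map (inl k X Y) (inl k X Y) = map (inl k X Y) (inl k X Y) ∘ₗ R)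
    (hXY : ∀ (x : X) (y : Y),
      Q ((x, (0 : Y)) ⊗ₜ[k] ((0 : X), y)) = ((0 : X), y) ⊗ₜ[k] (x, (0 : Y)))
    (t : Module.Dual k X ⊗[k] X) :
    tilde k (X × Y) Q (map (fst k X Y).dualMap (inl k X Y) t) =
      map (inl k X Y) (fst k X Y).dualMap (tilde k X R t) := by
  induction t using TensorProduct.induction_on with
  | zero => simp
  | tmul φ v =>
    apply homOfTensorDual_injective (k := k)
    rw [map_tmul, homOfTensorDual_tilde_tmul, homOfTensorDual_map, homOfTensorDual_tilde_tmul]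
    apply LinearMap.prod_ext <;> refine LinearMap.ext fun w => ?_
    · have hQ := LinearMap.congr_fun hXX (v ⊗ₜ w)
      simp only [LinearMap.comp_apply, map_tmul, mk_apply] at hQ ⊢
      have hφ : (fst k X Y).dualMap φ ∘ₗ inl k X Y = φ := rfl
      rw [hQ, contractFirst_map, hφ]
      simp
    · simp [hXY, Prod.mk_zero_zero]
  | add x y hx hy => simp only [map_add, hx, hy]

lemma tilde_glue_map_inr (q : k) (R' : Y ⊗[k] Y →ₗ[k] Y ⊗[k] Y)
    (Q : (X × Y) ⊗[k] (X × Y) →ₗ[k] (X × Y) ⊗[k] (X × Y))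
    (hYY : Q ∘ₗ map (inr k X Y) (inr k X Y) = map (inr k X Y) (inr k X Y) ∘ₗ R')
    (hYX : ∀ (y : Y) (x : X),
      Q (((0 : X), y) ⊗ₜ[k] (x, (0 : Y))) =
        (x, (0 : Y)) ⊗ₜ[k] ((0 : X), y) + (q - q⁻¹) • (((0 : X), y) ⊗ₜ[k] (x, (0 : Y))))
    (t : Module.Dual k Y ⊗[k] Y) :
    tilde k (X × Y) Q (map (snd k X Y).dualMap (inr k X Y) t) =
      map (inr k X Y) (snd k X Y).dualMap (tilde k Y R' t) +
        ((q - q⁻¹) * contractLeft k Y t) •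
          map (inl k X Y) (fst k X Y).dualMap (coevaluation k X 1) := by
  induction t using TensorProduct.induction_on with
  | zero => simp
  | tmul ψ w =>
    apply homOfTensorDual_injective (k := k)
    rw [map_tmul, map_add, map_smul, homOfTensorDual_tilde_tmul, homOfTensorDual_map,
      homOfTensorDual_tilde_tmul, homOfTensorDual_map, homOfTensorDual_coevaluation]
    apply LinearMap.prod_ext <;> refine LinearMap.ext fun x => ?_
    · simp [hYX, Prod.mk_zero_zero, smul_smul]
    · have hQ := LinearMap.congr_fun hYY (w ⊗ₜ x)
      simp only [LinearMap.comp_apply, map_tmul, mk_apply] at hQ ⊢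
      have hψ : (snd k X Y).dualMap ψ ∘ₗ inr k X Y = ψ := rfl
      rw [hQ, contractFirst_map, hψ]
      simp
  | add x y hx hy =>
    simp only [map_add, hx, hy, mul_add, add_smul]
    abel

end Glueing

theorem stmt18_general {k : Type*} [Field k] {X Y : Type*}
    [AddCommGroup X] [Module k X] [FiniteDimensional k X]
    [AddCommGroup Y] [Module k Y] [FiniteDimensional k Y]
    (q : k)
    (R : X ⊗[k] X →ₗ[k] X ⊗[k] X) (R' : Y ⊗[k] Y →ₗ[k] Y ⊗[k] Y)
    -- dualisability of `R` and `R'`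
    (BX : X ⊗[k] Module.Dual k X →ₗ[k] Module.Dual k X ⊗[k] X)
    (hBX : tilde k X R ∘ₗ BX = LinearMap.id ∧ BX ∘ₗ tilde k X R = LinearMap.id)
    (BY : Y ⊗[k] Module.Dual k Y →ₗ[k] Module.Dual k Y ⊗[k] Y)
    (hBY : tilde k Y R' ∘ₗ BY = LinearMap.id ∧ BY ∘ₗ tilde k Y R' = LinearMap.id)
    -- the glueing `Q = R ⊕_q R'`
    (Q : (X × Y) ⊗[k] (X × Y) →ₗ[k] (X × Y) ⊗[k] (X × Y))
    (hXX : Q ∘ₗ TensorProduct.map (LinearMap.inl k X Y) (LinearMap.inl k X Y) =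
      TensorProduct.map (LinearMap.inl k X Y) (LinearMap.inl k X Y) ∘ₗ R)
    (hYY : Q ∘ₗ TensorProduct.map (LinearMap.inr k X Y) (LinearMap.inr k X Y) =
      TensorProduct.map (LinearMap.inr k X Y) (LinearMap.inr k X Y) ∘ₗ R')
    (hXY : ∀ (x : X) (y : Y),
      Q ((x, (0 : Y)) ⊗ₜ[k] ((0 : X), y)) = ((0 : X), y) ⊗ₜ[k] (x, (0 : Y)))
    (hYX : ∀ (y : Y) (x : X),
      Q (((0 : X), y) ⊗ₜ[k] (x, (0 : Y))) =
        (x, (0 : Y)) ⊗ₜ[k] ((0 : X), y) +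
          (q - q⁻¹) • (((0 : X), y) ⊗ₜ[k] (x, (0 : Y))))
    (BQ : (X × Y) ⊗[k] Module.Dual k (X × Y) →ₗ[k] Module.Dual k (X × Y) ⊗[k] (X × Y))
    (hBQ : tilde k (X × Y) Q ∘ₗ BQ = LinearMap.id ∧
      BQ ∘ₗ tilde k (X × Y) Q = LinearMap.id) :
    btrace k (X × Y) BQ =
      btrace k X BX + btrace k Y BY - (q - q⁻¹) * (btrace k X BX * btrace k Y BY) := by
  set cX := BX (coevaluation k X 1)
  set cY := BY (coevaluation k Y 1)
  have hcX : tilde k X R cX = coevaluation k X 1 := LinearMap.congr_fun hBX.1 _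
  have hcY : tilde k Y R' cY = coevaluation k Y 1 := LinearMap.congr_fun hBY.1 _
  set iX := map (fst k X Y).dualMap (inl k X Y)
  set iY := map (snd k X Y).dualMap (inr k X Y)
  have hu : tilde k (X × Y) Q (iX cX + iY cY - ((q - q⁻¹) * contractLeft k Y cY) • iX cX) =
      coevaluation k (X × Y) 1 := by
    rw [map_sub, map_add, map_smul, tilde_glue_map_inl R Q hXX hXY,
      tilde_glue_map_inr q R' Q hYY hYX, hcX, hcY, coevaluation_prod]
    abel
  rw [btrace_eq_contractLeft hBQ.2 hu, map_sub, map_add, map_smul,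
    contractLeft_map_dualMap_of_comp_eq_id (fst_comp_inl k X Y),
    contractLeft_map_dualMap_of_comp_eq_id (snd_comp_inr k X Y), btrace, btrace,
    smul_eq_mul]
  ring

/-- the braided trace of the glueing of two dualisable `q`-Hecke
Yang-Baxter operators satisfies
`tr(R ⊕_q R') = tr(R) + tr(R') − (q−q⁻¹)·tr(R)·tr(R')`. -/
theorem stmt18 {k : Type*} [Field k] {X Y : Type*}
    [AddCommGroup X] [Module k X] [FiniteDimensional k X]
    [AddCommGroup Y] [Module k Y] [FiniteDimensional k Y]
    (q : k) (hq : q ≠ 0)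
    (R : X ⊗[k] X →ₗ[k] X ⊗[k] X) (R' : Y ⊗[k] Y →ₗ[k] Y ⊗[k] Y)
    (hRbij : Function.Bijective R) (hR'bij : Function.Bijective R')
    (hRbraid : Braid k R) (hR'braid : Braid k R')
    (hRHecke : (R - q • LinearMap.id) ∘ₗ (R + q⁻¹ • LinearMap.id) = 0)
    (hR'Hecke : (R' - q • LinearMap.id) ∘ₗ (R' + q⁻¹ • LinearMap.id) = 0)
    -- dualisability of `R` and `R'`
    (Rinv : X ⊗[k] X →ₗ[k] X ⊗[k] X)
    (hRinv : R ∘ₗ Rinv = LinearMap.id ∧ Rinv ∘ₗ R = LinearMap.id)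
    (R'inv : Y ⊗[k] Y →ₗ[k] Y ⊗[k] Y)
    (hR'inv : R' ∘ₗ R'inv = LinearMap.id ∧ R'inv ∘ₗ R' = LinearMap.id)
    (BX : X ⊗[k] Module.Dual k X →ₗ[k] Module.Dual k X ⊗[k] X)
    (hBX : tilde k X R ∘ₗ BX = LinearMap.id ∧ BX ∘ₗ tilde k X R = LinearMap.id)
    (BY : Y ⊗[k] Module.Dual k Y →ₗ[k] Module.Dual k Y ⊗[k] Y)
    (hBY : tilde k Y R' ∘ₗ BY = LinearMap.id ∧ BY ∘ₗ tilde k Y R' = LinearMap.id)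
    (hRinvt : Function.Bijective (tilde k X Rinv))
    (hR'invt : Function.Bijective (tilde k Y R'inv))
    -- the glueing `Q = R ⊕_q R'`
    (Q : (X × Y) ⊗[k] (X × Y) →ₗ[k] (X × Y) ⊗[k] (X × Y))
    (hXX : Q ∘ₗ TensorProduct.map (LinearMap.inl k X Y) (LinearMap.inl k X Y) =
      TensorProduct.map (LinearMap.inl k X Y) (LinearMap.inl k X Y) ∘ₗ R)
    (hYY : Q ∘ₗ TensorProduct.map (LinearMap.inr k X Y) (LinearMap.inr k X Y) =
      TensorProduct.map (LinearMap.inr k X Y) (LinearMap.inr k X Y) ∘ₗ R')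
    (hXY : ∀ (x : X) (y : Y),
      Q ((x, (0 : Y)) ⊗ₜ[k] ((0 : X), y)) = ((0 : X), y) ⊗ₜ[k] (x, (0 : Y)))
    (hYX : ∀ (y : Y) (x : X),
      Q (((0 : X), y) ⊗ₜ[k] (x, (0 : Y))) =
        (x, (0 : Y)) ⊗ₜ[k] ((0 : X), y) +
          (q - q⁻¹) • (((0 : X), y) ⊗ₜ[k] (x, (0 : Y))))
    (BQ : (X × Y) ⊗[k] Module.Dual k (X × Y) →ₗ[k] Module.Dual k (X × Y) ⊗[k] (X × Y))
    (hBQ : tilde k (X × Y) Q ∘ₗ BQ = LinearMap.id ∧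
      BQ ∘ₗ tilde k (X × Y) Q = LinearMap.id) :
    btrace k (X × Y) BQ =
      btrace k X BX + btrace k Y BY - (q - q⁻¹) * (btrace k X BX * btrace k Y BY) :=
  stmt18_general q R R' BX hBX BY hBY Q hXX hYY hXY hYX BQ hBQ
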